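/- Let 0 < p < ∞ and s < 1/p - 1, and 0 < q < ∞. For N ≥ 1 let f_N = 2^N 𝟙_{[0,2^{-N})}. Then for all M > N ≥ 1, the dyadic Besov distance satisfies ‖f_M - f_N‖_{B^{s,dyad}_{p,q}} = (Σ_{j=N}^{M-1} 2^{j(s+1-1/p)q})^{1/q}, which tends to 0 as N → ∞; hence (f_N) is a Cauchy sequence in the B^{s,dyad}_{p,q} quasi-norm. -/

import Mathlib

open MeasureTheory Real

/-- The Haar mother function `h = 𝟙_{[0,1/2)} - 𝟙_{[1/2,1)}`. -/
noncomputable def haar (x : ℝ) : ℝ :=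
  if 0 ≤ x ∧ x < 1/2 then 1 else if 1/2 ≤ x ∧ x < 1 then -1 else 0

/-- The dyadic Besov quasi-norm `‖g‖_{B^{s,dyad}_{p,q}}` for `0 < p, q < ∞`. -/
noncomputable def dyadNorm (s p q : ℝ) (g : ℝ → ℝ) : ℝ :=
  (∑' j : ℕ, (2 ^ ((j:ℝ) * (s - 1/p)) *
    (∑' μ : ℤ, |2 ^ j * ∫ x : ℝ, g x * haar (2 ^ j * x - (μ : ℝ))| ^ p) ^ (1/p)) ^ q) ^ (1/q)

/-- `f_N = 2^N 𝟙_{[0,2^{-N})}`. -/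
noncomputable def fStep (N : ℕ) : ℝ → ℝ := fun x =>
  2 ^ N * Set.indicator (Set.Ico (0:ℝ) (2 ^ (-(N:ℝ)))) (fun _ => (1:ℝ)) x

/-!
Substituting `y = 2^j x - μ` turns the Haar coefficient `⟨f_K, h_{j,μ}⟩` into
`2^{K-j} ∫_{-μ}^{2^{j-K}-μ} h`. The primitive `t ↦ ∫_0^t h` vanishes at every integer and is the
identity on `[0, 1/2]`, so the coefficient is `1` for `μ = 0, j < K` and `0` otherwise. Hence the
only nonzero coefficients of `f_M - f_N` are `⟨f_M - f_N, h_{j,0}⟩ = 1` for `N ≤ j < M`, which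
gives the norm formula; for `s + 1 - 1/p < 0` this norm is bounded by the tail of a geometric
series.
-/
open Filter Topology

lemma measurable_haar : Measurable haar :=
  .ite measurableSet_Ico measurable_const (.ite measurableSet_Ico measurable_const measurable_const)

lemma abs_haar_le_one (x : ℝ) : |haar x| ≤ 1 := by
  unfold haar; split_ifs <;> norm_num

lemma intervalIntegrable_haar (a b : ℝ) : IntervalIntegrable haar volume a b := by
  refine (intervalIntegrable_const (c := (1:ℝ))).mono_fun measurable_haar.aestronglyMeasurable ?_
  exact .of_forall fun x => by simpa using abs_haar_le_one x

lemma intervalIntegral_eq_of_eqOn_Ioo {f : ℝ → ℝ} {a b c : ℝ} (hab : a ≤ b)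
    (h : Set.EqOn f (fun _ => c) (Set.Ioo a b)) : ∫ x in a..b, f x = (b - a) * c := by
  rw [intervalIntegral.integral_of_le hab, integral_Ioc_eq_integral_Ioo,
    setIntegral_congr_fun measurableSet_Ioo h]
  simp [hab]

lemma haar_eq_zero_of_neg {x : ℝ} (hx : x < 0) : haar x = 0 := by
  unfold haar; split_ifs <;> first | rfl | linarith [‹_ ∧ _›.1]

lemma haar_eq_zero_of_one_le {x : ℝ} (hx : 1 ≤ x) : haar x = 0 := by
  unfold haar; split_ifs <;> first | rfl | linarith [‹_ ∧ _›.2]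

lemma integral_haar_of_nonpos {t : ℝ} (ht : t ≤ 0) : ∫ x in (0:ℝ)..t, haar x = 0 := by
  rw [intervalIntegral.integral_symm,
    intervalIntegral_eq_of_eqOn_Ioo ht fun x hx => haar_eq_zero_of_neg hx.2]
  simp

lemma integral_haar_of_le_half {t : ℝ} (ht₀ : 0 ≤ t) (ht : t ≤ 1 / 2) :
    ∫ x in (0:ℝ)..t, haar x = t := by
  rw [intervalIntegral_eq_of_eqOn_Ioo ht₀ (c := 1) fun x hx => ?_]
  · ring
  · rw [haar, if_pos ⟨hx.1.le, hx.2.trans_le ht⟩]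

lemma integral_haar_of_one_le {t : ℝ} (ht : 1 ≤ t) : ∫ x in (0:ℝ)..t, haar x = 0 := by
  have hneg : ∫ x in (1/2:ℝ)..1, haar x = -(1 / 2) := by
    rw [intervalIntegral_eq_of_eqOn_Ioo (by norm_num) (c := -1) fun x hx => ?_]
    · norm_num
    · rw [haar, if_neg fun h => by linarith [h.2, hx.1], if_pos ⟨hx.1.le, hx.2⟩]
  rw [← intervalIntegral.integral_add_adjacent_intervals (b := 1) (intervalIntegrable_haar _ _)
      (intervalIntegrable_haar _ _),
    ← intervalIntegral.integral_add_adjacent_intervals (b := 1/2) (intervalIntegrable_haar _ _)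
      (intervalIntegrable_haar _ _),
    integral_haar_of_le_half (by norm_num) le_rfl, hneg,
    intervalIntegral_eq_of_eqOn_Ioo ht fun x hx => haar_eq_zero_of_one_le hx.1.le]
  ring

lemma integral_haar_intCast (n : ℤ) : ∫ x in (0:ℝ)..n, haar x = 0 := by
  rcases le_or_gt n 0 with hn | hn
  · exact integral_haar_of_nonpos (by exact_mod_cast hn)
  · exact integral_haar_of_one_le (by exact_mod_cast hn)

lemma integral_haar_eq_sub (a b : ℝ) :
    ∫ x in a..b, haar x = (∫ x in (0:ℝ)..b, haar x) - ∫ x in (0:ℝ)..a, haar x :=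
  (intervalIntegral.integral_interval_sub_left (intervalIntegrable_haar _ _)
    (intervalIntegrable_haar _ _)).symm

lemma integral_haar_intCast_intCast (m n : ℤ) : ∫ x in (m:ℝ)..n, haar x = 0 := by
  rw [integral_haar_eq_sub, integral_haar_intCast, integral_haar_intCast, sub_self]

lemma integral_haar_shift_of_le_half (μ : ℤ) {t : ℝ} (ht₀ : 0 ≤ t) (ht : t ≤ 1 / 2) :
    ∫ x in (-μ:ℝ)..t - μ, haar x = if μ = 0 then t else 0 := by
  rw [integral_haar_eq_sub, ← Int.cast_neg, integral_haar_intCast, sub_zero]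
  rcases lt_trichotomy μ 0 with hμ | rfl | hμ
  · have : (μ:ℝ) ≤ -1 := by exact_mod_cast Int.le_sub_one_of_lt hμ
    rw [integral_haar_of_one_le (by linarith), if_neg hμ.ne]
  · simpa using integral_haar_of_le_half ht₀ ht
  · have : (1:ℝ) ≤ μ := by exact_mod_cast hμ
    rw [integral_haar_of_nonpos (by linarith), if_neg hμ.ne']

lemma integral_fStep_mul (K : ℕ) (g : ℝ → ℝ) :
    ∫ x, fStep K x * g x = 2 ^ K * ∫ x in (0:ℝ)..2 ^ (-(K:ℝ)), g x := by
  simp only [fStep, mul_assoc, integral_const_mul, ← Set.indicator_mul_left, one_mul]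
  rw [integral_indicator measurableSet_Ico, integral_Ico_eq_integral_Ioc,
    intervalIntegral.integral_of_le (by positivity)]

lemma integral_fStep_mul_haar (K j : ℕ) (μ : ℤ) :
    ∫ x, fStep K x * haar (2 ^ j * x - μ) = if μ = 0 ∧ j < K then 1 else 0 := by
  rw [integral_fStep_mul, intervalIntegral.integral_comp_mul_sub (f := haar) (by positivity),
    smul_eq_mul, mul_zero, zero_sub, Real.rpow_neg zero_le_two, Real.rpow_natCast]
  rcases lt_or_ge j K with hjK | hKj
  · have hpow : (2:ℝ) ^ K = 2 ^ j * 2 ^ (K - j) := (pow_mul_pow_sub 2 hjK.le).symm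
    have ht : (2:ℝ) ^ j * ((2:ℝ) ^ K)⁻¹ = ((2:ℝ) ^ (K - j))⁻¹ := by
      rw [hpow]; field_simp
    have hle : ((2:ℝ) ^ (K - j))⁻¹ ≤ 1 / 2 := by
      rw [one_div]
      exact inv_anti₀ two_pos (le_self_pow₀ one_le_two (by omega))
    rw [ht, integral_haar_shift_of_le_half μ (by positivity) hle]
    rcases eq_or_ne μ 0 with rfl | hμ
    · rw [if_pos rfl, if_pos ⟨rfl, hjK⟩, hpow]; field_simp
    · rw [if_neg hμ, if_neg fun h => hμ h.1, mul_zero, mul_zero]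
  · have ht : (2:ℝ) ^ j * ((2:ℝ) ^ K)⁻¹ = ((2 ^ (j - K) : ℤ) : ℝ) := by
      rw [← pow_mul_pow_sub 2 hKj]; push_cast; field_simp
    rw [ht, ← Int.cast_neg, ← Int.cast_sub, integral_haar_intCast_intCast,
      if_neg fun h => (not_lt.2 hKj) h.2, mul_zero, mul_zero]

lemma integrable_fStep (K : ℕ) : Integrable (fStep K) :=
  ((integrableOn_const measure_Ico_lt_top.ne).integrable_indicator measurableSet_Ico).const_mul _

lemma integrable_fStep_mul_haar (K j : ℕ) (μ : ℤ) :
    Integrable fun x => fStep K x * haar (2 ^ j * x - μ) :=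
  (integrable_fStep K).mul_bdd (measurable_haar.comp (by fun_prop)).aestronglyMeasurable
    (.of_forall fun x => (Real.norm_eq_abs _).trans_le (abs_haar_le_one _))

lemma integral_fStep_sub_mul_haar {N M : ℕ} (hNM : N ≤ M) (j : ℕ) (μ : ℤ) :
    ∫ x, (fStep M x - fStep N x) * haar (2 ^ j * x - μ) =
      if μ = 0 ∧ j ∈ Finset.Ico N M then 1 else 0 := by
  simp only [sub_mul]
  rw [integral_sub (integrable_fStep_mul_haar _ _ _) (integrable_fStep_mul_haar _ _ _),
    integral_fStep_mul_haar, integral_fStep_mul_haar]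
  simp only [Finset.mem_Ico]
  split_ifs <;> first | omega | norm_num

lemma dyadNorm_eq_of_integral_mul_haar {p q : ℝ} (hp : p ≠ 0) (hq : q ≠ 0) (s : ℝ)
    {g : ℝ → ℝ} (S : Finset ℕ)
    (hg : ∀ (j : ℕ) (μ : ℤ),
      ∫ x, g x * haar (2 ^ j * x - μ) = if μ = 0 ∧ j ∈ S then 1 else 0) :
    dyadNorm s p q g = (∑ j ∈ S, (2:ℝ) ^ ((j:ℝ) * (s + 1 - 1/p) * q)) ^ (1/q) := by
  have hterm : ∀ j : ℕ, ((2:ℝ) ^ ((j:ℝ) * (s - 1/p)) *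
      (∑' μ : ℤ, |2 ^ j * ∫ x, g x * haar (2 ^ j * x - μ)| ^ p) ^ (1/p)) ^ q =
      if j ∈ S then (2:ℝ) ^ ((j:ℝ) * (s + 1 - 1/p) * q) else 0 := by
    intro j
    simp only [hg]
    by_cases hj : j ∈ S
    · have hinner :
          ∑' μ : ℤ, |(2:ℝ) ^ j * if μ = 0 ∧ j ∈ S then 1 else 0| ^ p = ((2:ℝ) ^ j) ^ p := by
        rw [← tsum_ite_eq (0:ℤ) (fun _ => ((2:ℝ) ^ j) ^ p)]
        refine tsum_congr fun μ => ?_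
        by_cases hμ : μ = 0
        · rw [if_pos ⟨hμ, hj⟩, if_pos hμ, mul_one, abs_of_pos (by positivity)]
        · rw [if_neg fun h => hμ h.1, if_neg hμ, mul_zero, abs_zero, Real.zero_rpow hp]
      rw [hinner, if_pos hj, one_div, Real.rpow_rpow_inv (by positivity) hp,
        ← Real.rpow_natCast 2 j, ← Real.rpow_add two_pos, ← Real.rpow_mul zero_le_two]
      congr 1; ring
    · simp only [hj, and_false, if_false, mul_zero, abs_zero, Real.zero_rpow hp, tsum_zero,
        Real.zero_rpow (one_div_ne_zero hp), Real.zero_rpow hq]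
  rw [dyadNorm, tsum_congr hterm, tsum_eq_sum (s := S) fun j hj => if_neg hj]
  exact congrArg (· ^ (1/q)) (Finset.sum_congr rfl fun j hj => if_pos hj)

lemma sum_Ico_rpow_natCast_mul_le {b c : ℝ} (hb : 1 < b) (hc : c < 0) (N M : ℕ) :
    ∑ j ∈ Finset.Ico N M, b ^ ((j:ℝ) * c) ≤ (b ^ c) ^ N / (1 - b ^ c) := by
  simp only [mul_comm _ c, Real.rpow_mul_natCast (zero_le_one.trans hb.le)]
  exact geom_sum_Ico_le_of_lt_one (by positivity) (Real.rpow_lt_one_of_one_lt_of_neg hb hc)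

lemma tendsto_rpow_pow_div_one_sub {r a : ℝ} (hr₀ : 0 ≤ r) (hr : r < 1) (ha : 0 < a) :
    Tendsto (fun N : ℕ => (r ^ N / (1 - r)) ^ a) atTop (𝓝 0) := by
  have := ((tendsto_pow_atTop_nhds_zero_of_lt_one hr₀ hr).div_const (1 - r)).rpow_const
    (p := a) (Or.inr ha.le)
  rwa [zero_div, Real.zero_rpow ha.ne'] at this

/-- For `s < 1/p - 1`: explicit dyadic Besov distance of the functions `f_N`,
and the resulting Cauchy property. -/
theorem fStep_cauchy_in_dyadic_besov (p q s : ℝ) (hp : 0 < p) (hq : 0 < q)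
    (hs : s < 1/p - 1) :
    (∀ M N : ℕ, 1 ≤ N → N < M →
      dyadNorm s p q (fun x => fStep M x - fStep N x)
        = (∑ j ∈ Finset.Ico N M, (2:ℝ) ^ ((j:ℝ) * (s + 1 - 1/p) * q)) ^ (1/q)) ∧
    (∀ ε : ℝ, 0 < ε → ∃ N₀ : ℕ, 1 ≤ N₀ ∧ ∀ M N : ℕ, N₀ ≤ N → N < M →
      dyadNorm s p q (fun x => fStep M x - fStep N x) < ε) := by
  have hnorm : ∀ M N : ℕ, N ≤ M → dyadNorm s p q (fun x => fStep M x - fStep N x) =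
      (∑ j ∈ Finset.Ico N M, (2:ℝ) ^ ((j:ℝ) * (s + 1 - 1/p) * q)) ^ (1/q) := fun M N hNM =>
    dyadNorm_eq_of_integral_mul_haar hp.ne' hq.ne' s _ (integral_fStep_sub_mul_haar hNM)
  refine ⟨fun M N _ hNM => hnorm M N hNM.le, fun ε hε => ?_⟩
  have hc : (s + 1 - 1/p) * q < 0 := mul_neg_of_neg_of_pos (by linarith) hq
  have hr : (2:ℝ) ^ ((s + 1 - 1/p) * q) < 1 := Real.rpow_lt_one_of_one_lt_of_neg one_lt_two hc
  obtain ⟨N₀, hN₀⟩ := eventually_atTop.1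
    ((tendsto_rpow_pow_div_one_sub (a := 1/q) (by positivity) hr (by positivity)).eventually
      (gt_mem_nhds hε))
  refine ⟨max N₀ 1, le_max_right _ _, fun M N hN _ => ?_⟩
  rw [hnorm M N (by omega)]
  simp only [mul_assoc]
  exact (Real.rpow_le_rpow (Finset.sum_nonneg fun j _ => by positivity)
    (sum_Ico_rpow_natCast_mul_le one_lt_two hc N M) (by positivity)).trans_lt
    (hN₀ N (le_of_max_le_left hN))
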